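/- arXiv:0809.4526 — 4 statements merged into one kernel-verified Lean document; each statement's English description precedes it below -/
import Mathlib

section
/- For every j = 1,…,k and every s in R, ∑_{i=1}^{j} ∂/∂sⁱ [ ½( x_{(j)}(s) · ι(xⁱ(s)) + (−1)^{j+1} ι(xⁱ(s)) · x_{(j)}(s) ) ] = 0 in G_n, where x_{(j)}(s) = x₁(s)∧⋯∧x_j(s), the products are products in G_n, and ½(B·ι(v) + (−1)^{j+1} ι(v)·B) is the inner product (contraction) of the j-vector B with the vector v. -/
/-!
Expand `x_{(j)}` over permutations and contract with `xⁱ`. Since `⟪xⁱ, x_l⟫ = δⁱ_l` on `R`, the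
`i`-th contraction there equals an alternating sum, over the pairs `(σ, l)` with `σ l = i`, of
Clifford products of the tangent vectors `x_{σ k}`, `k ≠ l`; the reciprocal frame has
disappeared, so its derivatives never enter. Differentiating in `sⁱ = s^{σ l}` by the product
rule replaces one factor `x_{σ k}` by `∂_{σ l} x_{σ k}`, which is symmetric in `σ l` and `σ k`.
Composing `σ` with the transposition of `l` and `k` leaves that term unchanged and flips the
sign of `σ`, so the terms cancel in pairs.
-/

open MeasureTheory RealInnerProductSpace

noncomputable section

/-- The quadratic form `Q(v) = ‖v‖²` on Euclidean `n`-space. -/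
def Qf (n : ℕ) : QuadraticForm ℝ (EuclideanSpace ℝ (Fin n)) :=
  LinearMap.BilinMap.toQuadraticMap (innerₗ (EuclideanSpace ℝ (Fin n)))

/-- The wedge product `v₁∧⋯∧v_k = (1/k!)·∑_{σ} sgn(σ)·ι(v_{σ(1)})⋯ι(v_{σ(k)})`. -/
def wedge {n k : ℕ} (v : Fin k → EuclideanSpace ℝ (Fin n)) : CliffordAlgebra (Qf n) :=
  (k.factorial : ℝ)⁻¹ • ∑ σ : Equiv.Perm (Fin k),
    (Equiv.Perm.sign σ : ℤ) • (List.ofFn fun i => CliffordAlgebra.ι (Qf n) (v (σ i))).prod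

open Equiv Function

theorem Equiv.Perm.sum_sign_smul_eq_zero_of_mul_swap {α F : Type*} [Fintype α] [DecidableEq α]
    [AddCommGroup F] {T : Perm α → F} {a b : α} (hab : a ≠ b)
    (hT : ∀ σ, T (σ * swap a b) = T σ) :
    ∑ σ : Perm α, (Perm.sign σ : ℤ) • T σ = 0 :=
  Finset.sum_involution (fun σ _ => σ * swap a b)
    (fun σ _ => by simp [hT, Perm.sign_swap hab])
    (fun σ _ _ => mul_swap_eq_iff.not.mpr hab) (fun σ _ => Finset.mem_univ _)
    fun σ _ => by simp [mul_assoc]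

section Calculus

variable {S E F : Type*} [NormedAddCommGroup S] [NormedSpace ℝ S] [NormedAddCommGroup E]
  [NormedSpace ℝ E] [NormedAddCommGroup F] [NormedSpace ℝ F]

theorem uniqueDiffOn_pi_Icc {ι : Type*} [Finite ι] {a b : ι → ℝ} (hab : ∀ i, a i < b i) :
    UniqueDiffOn ℝ (Set.Icc a b) :=
  Set.pi_univ_Icc a b ▸ UniqueDiffOn.univ_pi fun i => uniqueDiffOn_Icc (hab i)

theorem ContDiffAt.differentiableAt_fderiv_apply {f : S → E} {s : S} (hf : ContDiffAt ℝ 2 f s)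
    (v : S) : DifferentiableAt ℝ (fun y => fderiv ℝ f y v) s :=
  ((hf.fderiv_right (m := 1) le_rfl).differentiableAt one_ne_zero).clm_apply
    (differentiableAt_const v)

theorem fderiv_fderiv_apply_comm {f : S → E} {s : S} (hf : ContDiffAt ℝ 2 f s) (v w : S) :
    fderiv ℝ (fun y => fderiv ℝ f y v) s w = fderiv ℝ (fun y => fderiv ℝ f y w) s v := by
  have hf' : DifferentiableAt ℝ (fderiv ℝ f) s :=
    (hf.fderiv_right (m := 1) le_rfl).differentiableAt one_ne_zero
  simpa [fderiv_clm_apply hf' (differentiableAt_const _)] using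
    hf.isSymmSndFDerivAt (by simp) w v

theorem ContinuousMultilinearMap.fderiv_comp_apply {ι : Type*} [Fintype ι] [DecidableEq ι]
    (M : ContinuousMultilinearMap ℝ (fun _ : ι => E) F) {g : ι → S → E} {s : S}
    (hg : ∀ i, DifferentiableAt ℝ (g i) s) (u : S) :
    fderiv ℝ (fun y => M fun i => g i y) s u =
      ∑ i, M (update (fun i => g i s) i (fderiv ℝ (g i) s u)) := by
  rw [(HasFDerivAt.multilinear_comp M fun i => (hg i).hasFDerivAt).fderiv]
  simp

variable {m : ℕ} (M : ContinuousMultilinearMap ℝ (fun _ : Fin m => E) F)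

/-- For `M` the Clifford product and `c l = (-1) ^ (m + 2 + l) / (m + 1)!`, this is the inner
product `wedge v ⌊ w` for a vector `w` with `⟪w, v l⟫ = δᵢₗ`
(`half_smul_map_wedge_mul_ι_add_swap`). -/
def dualContraction (c : Fin (m + 1) → ℝ) (i : Fin (m + 1)) (v : Fin (m + 1) → E) : F :=
  ∑ σ : Perm (Fin (m + 1)), (Perm.sign σ : ℤ) •
    ∑ l, (if σ l = i then c l else 0) • M fun k => v (σ (l.succAbove k))

variable (V : Fin (m + 1) → S → E) (u : Fin (m + 1) → S) {s : S}

theorem sum_sign_smul_fderiv_succAbove_eq_zero (hV : ∀ p, DifferentiableAt ℝ (V p) s)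
    (hsymm : ∀ p q, fderiv ℝ (V q) s (u p) = fderiv ℝ (V p) s (u q)) (l : Fin (m + 1)) :
    ∑ σ : Perm (Fin (m + 1)), (Perm.sign σ : ℤ) •
      fderiv ℝ (fun y => M fun k => V (σ (l.succAbove k)) y) s (u (σ l)) = 0 := by
  simp_rw [M.fderiv_comp_apply (fun k => hV _), Finset.smul_sum]
  rw [Finset.sum_comm]
  refine Finset.sum_eq_zero fun k _ =>
    Perm.sum_sign_smul_eq_zero_of_mul_swap (Fin.succAbove_ne l k).symm fun σ => ?_
  congr 1
  ext k'
  rcases eq_or_ne k' k with rfl | hk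
  · simp [hsymm (σ (l.succAbove k'))]
  · simp [update_of_ne hk, swap_apply_of_ne_of_ne (Fin.succAbove_ne l k')
      (Fin.succAbove_right_injective.ne hk)]

theorem hasFDerivAt_dualContraction (c : Fin (m + 1) → ℝ) (i : Fin (m + 1))
    (hV : ∀ p, DifferentiableAt ℝ (V p) s) :
    HasFDerivAt (fun y => dualContraction M c i fun l => V l y)
      (∑ σ : Perm (Fin (m + 1)), (Perm.sign σ : ℤ) • ∑ l, (if σ l = i then c l else 0) •
        fderiv ℝ (fun y => M fun k => V (σ (l.succAbove k)) y) s) s :=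
  HasFDerivAt.fun_sum fun _ _ => (HasFDerivAt.fun_sum fun _ _ =>
    ((HasFDerivAt.multilinear_comp M fun _ => (hV _).hasFDerivAt).differentiableAt.hasFDerivAt
      |>.fun_const_smul _)).fun_const_smul _

theorem sum_fderiv_dualContraction_eq_zero (c : Fin (m + 1) → ℝ)
    (hV : ∀ p, DifferentiableAt ℝ (V p) s)
    (hsymm : ∀ p q, fderiv ℝ (V q) s (u p) = fderiv ℝ (V p) s (u q)) :
    ∑ i, fderiv ℝ (fun y => dualContraction M c i fun l => V l y) s (u i) = 0 := by
  calc _ = ∑ l, c l • ∑ σ : Perm (Fin (m + 1)), (Perm.sign σ : ℤ) •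
        fderiv ℝ (fun y => M fun k => V (σ (l.succAbove k)) y) s (u (σ l)) := by
        simp only [(hasFDerivAt_dualContraction M V _ _ hV).fderiv, sum_apply, smul_apply,
          Finset.smul_sum]
        rw [Finset.sum_comm, Finset.sum_comm (γ := Fin (m + 1))]
        refine Finset.sum_congr rfl fun σ _ => ?_
        rw [Finset.sum_comm]
        refine Finset.sum_congr rfl fun l _ => ?_
        simp [ite_smul, smul_comm (c l)]
    _ = 0 := Finset.sum_eq_zero fun l _ => by
        rw [sum_sign_smul_fderiv_succAbove_eq_zero M V u hV hsymm l, smul_zero]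

end Calculus

namespace CliffordAlgebra

variable {R M : Type*} [CommRing R] [AddCommGroup M] [Module R M] {Q : QuadraticForm R M}

theorem prod_ofFn_ι_mul_ι_add_swap : ∀ {m : ℕ} (v : Fin (m + 1) → M) (w : M),
    (List.ofFn fun i => ι Q (v i)).prod * ι Q w +
        (-1 : R) ^ (m + 2) • (ι Q w * (List.ofFn fun i => ι Q (v i)).prod) =
      ∑ l : Fin (m + 1), ((-1) ^ (m + 2 + (l : ℕ)) * QuadraticMap.polar Q w (v l)) •
        (List.ofFn fun i => ι Q (v (l.succAbove i))).prod
  | 0, v, w => by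
    simp [ι_mul_ι_add_swap, Algebra.algebraMap_eq_smul_one, QuadraticMap.polar_comm]
  | m + 1, v, w => by
    have hswap : ι Q w * ι Q (v 0) = QuadraticMap.polar Q w (v 0) • 1 - ι Q (v 0) * ι Q w := by
      rw [eq_sub_iff_add_eq, ι_mul_ι_add_swap, Algebra.algebraMap_eq_smul_one]
    have hsucc : ∀ l : Fin (m + 1), (List.ofFn fun i => ι Q (v (l.succ.succAbove i))).prod =
        ι Q (v 0) * (List.ofFn fun i => ι Q (v (l.succAbove i).succ)).prod := fun l => by
      simp [List.ofFn_succ, Fin.succ_succAbove_succ]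
    have htail : ∑ l : Fin (m + 1),
        ((-1) ^ (m + 3 + (l + 1 : ℕ)) * QuadraticMap.polar Q w (v l.succ)) •
          (ι Q (v 0) * (List.ofFn fun i => ι Q (v (l.succAbove i).succ)).prod) =
        ι Q (v 0) * ((List.ofFn fun i => ι Q (v i.succ)).prod * ι Q w +
          (-1 : R) ^ (m + 2) • (ι Q w * (List.ofFn fun i => ι Q (v i.succ)).prod)) := by
      rw [prod_ofFn_ι_mul_ι_add_swap, Finset.mul_sum]
      refine Finset.sum_congr rfl fun l _ => ?_
      rw [mul_smul_comm]
      ring_nf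
    rw [List.ofFn_succ, List.prod_cons, Fin.sum_univ_succ]
    simp only [hsucc, Fin.succAbove_zero, Fin.val_zero, Fin.val_succ]
    rw [htail, mul_assoc (ι Q (v 0)), ← mul_assoc (ι Q w), hswap]
    simp only [sub_mul, smul_mul_assoc, one_mul, mul_add, mul_smul_comm, mul_assoc]
    module

end CliffordAlgebra

theorem polar_Qf {n : ℕ} (v w : EuclideanSpace ℝ (Fin n)) :
    QuadraticMap.polar (Qf n) v w = 2 * ⟪v, w⟫ := by
  rw [Qf, LinearMap.BilinMap.polar_toQuadraticMap]
  simp [real_inner_comm v w, two_mul]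

open CliffordAlgebra in
theorem half_smul_wedge_mul_ι_add_swap {n m : ℕ} (v : Fin (m + 1) → EuclideanSpace ℝ (Fin n))
    (w : EuclideanSpace ℝ (Fin n)) :
    (2 : ℝ)⁻¹ • (wedge v * ι (Qf n) w + (-1 : ℝ) ^ (m + 2) • (ι (Qf n) w * wedge v)) =
      ((m + 1).factorial : ℝ)⁻¹ • ∑ σ : Perm (Fin (m + 1)), (Perm.sign σ : ℤ) •
        ∑ l : Fin (m + 1), ((-1) ^ (m + 2 + (l : ℕ)) * ⟪w, v (σ l)⟫) •
          (List.ofFn fun i => ι (Qf n) (v (σ (l.succAbove i)))).prod := by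
  let f : CliffordAlgebra (Qf n) →ₗ[ℝ] CliffordAlgebra (Qf n) := (2 : ℝ)⁻¹ •
    (LinearMap.mulRight ℝ (ι (Qf n) w) + (-1 : ℝ) ^ (m + 2) • LinearMap.mulLeft ℝ (ι (Qf n) w))
  change f (wedge v) = _
  simp only [wedge, map_smul, map_sum, map_zsmul]
  refine congrArg _ (Finset.sum_congr rfl fun σ _ => congrArg ((Perm.sign σ : ℤ) • ·) ?_)
  simp only [f, LinearMap.smul_apply, LinearMap.add_apply, LinearMap.mulRight_apply,
    LinearMap.mulLeft_apply]
  rw [prod_ofFn_ι_mul_ι_add_swap (fun i => v (σ i)), Finset.smul_sum]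
  refine Finset.sum_congr rfl fun l _ => ?_
  rw [polar_Qf, smul_smul]
  ring_nf

def ιProdCLM {n : ℕ} {A : Type*} [NormedRing A] [NormedAlgebra ℝ A]
    (e : CliffordAlgebra (Qf n) ≃ₐ[ℝ] A) (m : ℕ) :
    ContinuousMultilinearMap ℝ (fun _ : Fin m => EuclideanSpace ℝ (Fin n)) A :=
  (ContinuousMultilinearMap.mkPiAlgebraFin ℝ m A).compContinuousLinearMap fun _ =>
    (e.toLinearMap ∘ₗ CliffordAlgebra.ι (Qf n)).toContinuousLinearMap

theorem ιProdCLM_apply {n m : ℕ} {A : Type*} [NormedRing A] [NormedAlgebra ℝ A]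
    (e : CliffordAlgebra (Qf n) ≃ₐ[ℝ] A) (v : Fin m → EuclideanSpace ℝ (Fin n)) :
    ιProdCLM e m v = e (List.ofFn fun i => CliffordAlgebra.ι (Qf n) (v i)).prod := by
  simp [ιProdCLM, map_list_prod, List.map_ofFn, Function.comp_def]

theorem half_smul_map_wedge_mul_ι_add_swap {n m : ℕ} {A : Type*} [NormedRing A]
    [NormedAlgebra ℝ A] (e : CliffordAlgebra (Qf n) ≃ₐ[ℝ] A)
    (v : Fin (m + 1) → EuclideanSpace ℝ (Fin n)) (w : EuclideanSpace ℝ (Fin n)) (i : Fin (m + 1))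
    (hw : ∀ l, ⟪w, v l⟫ = if i = l then 1 else 0) :
    (2 : ℝ)⁻¹ • (e (wedge v) * e (CliffordAlgebra.ι (Qf n) w) +
        (-1 : ℝ) ^ (m + 2) • (e (CliffordAlgebra.ι (Qf n) w) * e (wedge v))) =
      dualContraction (ιProdCLM e m)
        (fun l => ((m + 1).factorial : ℝ)⁻¹ * (-1) ^ (m + 2 + (l : ℕ))) i v := by
  rw [← map_mul, ← map_mul, ← map_smul, ← map_add, ← map_smul,
    half_smul_wedge_mul_ι_add_swap, dualContraction]
  simp only [map_smul, map_sum, map_zsmul, Finset.smul_sum, ιProdCLM_apply, hw]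
  refine Finset.sum_congr rfl fun σ _ => Finset.sum_congr rfl fun l _ => ?_
  rw [smul_comm, smul_smul, mul_ite, mul_one, mul_zero, mul_ite, mul_zero]
  simp only [eq_comm]

theorem lemma_inner_derivative_sum_zero_general {n k : ℕ}
    (A : Type) [NormedRing A] [NormedAlgebra ℝ A]
    (e : CliffordAlgebra (Qf n) ≃ₐ[ℝ] A)
    (a b : Fin k → ℝ) (hab : ∀ i, a i < b i)
    (U₀ : Set (Fin k → ℝ)) (hU₀ : IsOpen U₀) (hRU₀ : Set.Icc a b ⊆ U₀)
    (x : (Fin k → ℝ) → EuclideanSpace ℝ (Fin n)) (hx : ContDiffOn ℝ 2 x U₀)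
    (xt : Fin k → (Fin k → ℝ) → EuclideanSpace ℝ (Fin n))
    (hxt : ∀ i s, xt i s = fderiv ℝ x s (Pi.single i 1))
    (xr : Fin k → (Fin k → ℝ) → EuclideanSpace ℝ (Fin n))
    (hxr_dual : ∀ i j, ∀ s ∈ Set.Icc a b,
      ⟪xr i s, xt j s⟫ = if i = j then (1 : ℝ) else 0)
    (j : ℕ) (hjk : j ≤ k) :
    ∀ s ∈ Set.Icc a b,
      ∑ i : Fin j,
        fderivWithin ℝ
          (fun s' => (2 : ℝ)⁻¹ •
            (e (wedge fun l : Fin j => xt (Fin.castLE hjk l) s')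
                * e (CliffordAlgebra.ι (Qf n) (xr (Fin.castLE hjk i) s'))
              + ((-1 : ℝ) ^ (j + 1)) •
                (e (CliffordAlgebra.ι (Qf n) (xr (Fin.castLE hjk i) s'))
                  * e (wedge fun l : Fin j => xt (Fin.castLE hjk l) s'))))
          (Set.Icc a b) s (Pi.single (Fin.castLE hjk i) 1)
        = 0 := by
  rcases j with _ | m
  · simp
  simp only [hxt] at hxr_dual ⊢
  intro s hs
  set u : Fin (m + 1) → Fin k → ℝ := fun l => Pi.single (Fin.castLE hjk l) 1
  set V : Fin (m + 1) → (Fin k → ℝ) → EuclideanSpace ℝ (Fin n) := fun l y => fderiv ℝ x y (u l)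
  set c : Fin (m + 1) → ℝ := fun l => ((m + 1).factorial : ℝ)⁻¹ * (-1) ^ (m + 2 + (l : ℕ))
  have hxs : ContDiffAt ℝ 2 x s := hx.contDiffAt (hU₀.mem_nhds (hRU₀ hs))
  have hV : ∀ l, DifferentiableAt ℝ (V l) s := fun l => hxs.differentiableAt_fderiv_apply _
  have hdual : ∀ y ∈ Set.Icc a b, ∀ i l : Fin (m + 1),
      ⟪xr (Fin.castLE hjk i) y, V l y⟫ = if i = l then 1 else 0 := fun y hy i l => by
    simp [V, u, hxr_dual _ _ y hy, Fin.castLE_inj]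
  calc _ = ∑ i, fderiv ℝ (fun y => dualContraction (ιProdCLM e m) c i fun l => V l y) s (u i) :=
        Finset.sum_congr rfl fun i _ => by
          rw [fderivWithin_congr (fun y hy => half_smul_map_wedge_mul_ι_add_swap e (fun l => V l y)
              (xr (Fin.castLE hjk i) y) i (hdual y hy i))
              (half_smul_map_wedge_mul_ι_add_swap e _ _ i (hdual s hs i)),
            (hasFDerivAt_dualContraction _ _ _ _ hV).differentiableAt.fderivWithin
              (uniqueDiffOn_pi_Icc hab s hs)]
    _ = 0 := sum_fderiv_dualContraction_eq_zero _ V u c hV fun _ _ =>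
        fderiv_fderiv_apply_comm hxs _ _

/-- the key Lemma: for a `C²` regular `k`-patch `x` on a neighborhood of the
rectangle `R = ∏ᵢ[aⁱ,bⁱ]` with tangent frame `xₜ`, reciprocal `C¹` frame `xr`, and
`x_{(j)} = x₁∧⋯∧x_j`, one has, for every `1 ≤ j ≤ k` and `s ∈ R`,
`∑_{i=1}^{j} ∂/∂sⁱ [ ½( x_{(j)}·ι(xⁱ) + (−1)^{j+1} ι(xⁱ)·x_{(j)} ) ] = 0` in `G_n`
(realized, via the isomorphism `e`, in a normed algebra `A` so that derivatives make sense;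
the choice of norm is irrelevant since `G_n` is finite-dimensional). -/
theorem lemma_inner_derivative_sum_zero {n k : ℕ} (hk : 1 ≤ k) (hkn : k ≤ n)
    (A : Type) [NormedRing A] [NormedAlgebra ℝ A]
    (e : CliffordAlgebra (Qf n) ≃ₐ[ℝ] A)
    (a b : Fin k → ℝ) (hab : ∀ i, a i < b i)
    (U₀ : Set (Fin k → ℝ)) (hU₀ : IsOpen U₀) (hRU₀ : Set.Icc a b ⊆ U₀)
    (x : (Fin k → ℝ) → EuclideanSpace ℝ (Fin n)) (hx : ContDiffOn ℝ 2 x U₀)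
    (xt : Fin k → (Fin k → ℝ) → EuclideanSpace ℝ (Fin n))
    (hxt : ∀ i s, xt i s = fderiv ℝ x s (Pi.single i 1))
    (hreg : ∀ s ∈ Set.Icc a b, LinearIndependent ℝ (fun i => xt i s))
    (xr : Fin k → (Fin k → ℝ) → EuclideanSpace ℝ (Fin n))
    (hxr_smooth : ∀ i, ContDiffOn ℝ 1 (xr i) (Set.Icc a b))
    (hxr_span : ∀ i, ∀ s ∈ Set.Icc a b,
      xr i s ∈ Submodule.span ℝ (Set.range fun j => xt j s))
    (hxr_dual : ∀ i j, ∀ s ∈ Set.Icc a b,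
      ⟪xr i s, xt j s⟫ = if i = j then (1 : ℝ) else 0)
    (j : ℕ) (hj : 1 ≤ j) (hjk : j ≤ k) :
    ∀ s ∈ Set.Icc a b,
      ∑ i : Fin j,
        fderivWithin ℝ
          (fun s' => (2 : ℝ)⁻¹ •
            (e (wedge fun l : Fin j => xt (Fin.castLE hjk l) s')
                * e (CliffordAlgebra.ι (Qf n) (xr (Fin.castLE hjk i) s'))
              + ((-1 : ℝ) ^ (j + 1)) •
                (e (CliffordAlgebra.ι (Qf n) (xr (Fin.castLE hjk i) s'))
                  * e (wedge fun l : Fin j => xt (Fin.castLE hjk l) s'))))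
          (Set.Icc a b) s (Pi.single (Fin.castLE hjk i) 1)
        = 0 :=
  lemma_inner_derivative_sum_zero_general A e a b hab U₀ hU₀ hRU₀ x hx xt hxt xr hxr_dual j hjk
end
end

section
/- (Green's theorem, circulation form, on a 2-patch in the plane.) Let R = [a¹,b¹]×[a²,b²] ⊂ ℝ², let x : U₀ → ℝ² be a C² map on an open neighborhood U₀ of R whose partial derivatives x₁(s) = ∂x/∂s¹(s) and x₂(s) = ∂x/∂s²(s) are linearly independent for every s ∈ R, and let F = (P,Q) : U → ℝ² be a C¹ vector field on an open set U containing x(R). Then ∫_R (∂Q/∂x − ∂P/∂y)(x(s)) · det[x₁(s), x₂(s)] ds¹ds² = ∫_{a¹}^{b¹} ⟪F(x(t,a²)), x₁(t,a²)⟫ dt + ∫_{a²}^{b²} ⟪F(x(b¹,t)), x₂(b¹,t)⟫ dt − ∫_{a¹}^{b¹} ⟪F(x(t,b²)), x₁(t,b²)⟫ dt − ∫_{a²}^{b²} ⟪F(x(a¹,t)), x₂(a¹,t)⟫ dt, where det[u,v] = u₁v₂ − u₂v₁ and ∂Q/∂x, ∂P/∂y denote partial derivatives with respect to the first and second coordinates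 of ℝ². -/
/-!
Pull the 1-form `⟪F, dx⟫` back along `x` to the pair `P = ⟪F ∘ x, ∂₁x⟫`, `G = ⟪F ∘ x, ∂₂x⟫`
on the rectangle and apply Green's theorem there (Mathlib's divergence theorem on a box). In
`∂₁G − ∂₂P` the second derivatives of `x` cancel by symmetry of `D²x`, leaving
`⟪DF(x) ∂₁x, ∂₂x⟫ − ⟪DF(x) ∂₂x, ∂₁x⟫`, which in the plane is the curl of `F` times
`det[∂₁x, ∂₂x]`.
-/

open MeasureTheory RealInnerProductSpace Set Topology

section Pullback

variable {E H : Type*} [NormedAddCommGroup E] [NormedSpace ℝ E]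
  [NormedAddCommGroup H] [InnerProductSpace ℝ H]

theorem ContDiffOn.inner_comp_fderiv_apply {x : E → H} {F : H → H} {V : Set E} {U : Set H}
    (hV : IsOpen V) (hx : ContDiffOn ℝ 2 x V) (hF : ContDiffOn ℝ 1 F U) (hxVU : MapsTo x V U)
    (v : E) : ContDiffOn ℝ 1 (fun s => ⟪F (x s), fderiv ℝ x s v⟫) V :=
  (hF.comp (hx.of_le one_le_two) hxVU).inner ℝ
    ((hx.fderiv_of_isOpen hV (by norm_num)).clm_apply contDiffOn_const)

theorem fderiv_inner_comp_fderiv_apply_sub_swap {x : E → H} {F : H → H} {s : E}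
    (hx : ContDiffAt ℝ 2 x s) (hF : DifferentiableAt ℝ F (x s)) (u v : E) :
    fderiv ℝ (fun t => ⟪F (x t), fderiv ℝ x t v⟫) s u
        - fderiv ℝ (fun t => ⟪F (x t), fderiv ℝ x t u⟫) s v
      = ⟪fderiv ℝ F (x s) (fderiv ℝ x s u), fderiv ℝ x s v⟫
        - ⟪fderiv ℝ F (x s) (fderiv ℝ x s v), fderiv ℝ x s u⟫ := by
  have hdx : HasFDerivAt (fderiv ℝ x) (fderiv ℝ (fderiv ℝ x) s) s :=
    ((hx.fderiv_right (m := 1) (by norm_num)).differentiableAt one_ne_zero).hasFDerivAt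
  have hx' : ∀ᶠ t in 𝓝 s, HasFDerivAt x (fderiv ℝ x t) t :=
    (hx.eventually (by simp)).mono fun t ht => (ht.differentiableAt two_ne_zero).hasFDerivAt
  have hFx : HasFDerivAt (fun t => F (x t)) _ s := hF.hasFDerivAt.comp s hx'.self_of_nhds
  have hderiv (w : E) := hFx.inner ℝ (hdx.clm_apply (hasFDerivAt_const w s))
  rw [(hderiv v).fderiv, (hderiv u).fderiv]
  simp only [ContinuousLinearMap.comp_apply, ContinuousLinearMap.prod_apply, fderivInnerCLM_apply,
    ContinuousLinearMap.comp_zero, zero_add, ContinuousLinearMap.flip_apply]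
  rw [second_derivative_symmetric_of_eventually hx' hdx u v]
  ring

end Pullback

theorem EuclideanSpace.inner_apply_sub_inner_apply_swap
    (T : EuclideanSpace ℝ (Fin 2) →L[ℝ] EuclideanSpace ℝ (Fin 2)) (u v : EuclideanSpace ℝ (Fin 2)) :
    ⟪T u, v⟫ - ⟪T v, u⟫
      = (T (EuclideanSpace.single 0 1) 1 - T (EuclideanSpace.single 1 1) 0)
        * (u 0 * v 1 - u 1 * v 0) := by
  have hT (w : EuclideanSpace ℝ (Fin 2)) :
      T w = w 0 • T (EuclideanSpace.single 0 1) + w 1 • T (EuclideanSpace.single 1 1) := by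
    rw [← map_smul, ← map_smul, ← map_add]
    congr 1
    ext i
    fin_cases i <;> simp
  rw [hT u, hT v]
  simp only [PiLp.inner_apply, RCLike.inner_apply, conj_trivial, Fin.sum_univ_two,
    PiLp.add_apply, PiLp.smul_apply, smul_eq_mul]
  ring

theorem integral_fderiv_sub_fderiv_eq_circulation_Icc {a₁ b₁ a₂ b₂ : ℝ} (h₁ : a₁ ≤ b₁)
    (h₂ : a₂ ≤ b₂) {P G : ℝ × ℝ → ℝ} {V : Set (ℝ × ℝ)} (hV : IsOpen V)
    (hRV : Icc (a₁, a₂) (b₁, b₂) ⊆ V) (hP : ContDiffOn ℝ 1 P V) (hG : ContDiffOn ℝ 1 G V) :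
    ∫ s in Icc (a₁, a₂) (b₁, b₂), (fderiv ℝ G s (1, 0) - fderiv ℝ P s (0, 1))
      = (∫ t in a₁..b₁, P (t, a₂)) + (∫ t in a₂..b₂, G (b₁, t))
        - (∫ t in a₁..b₁, P (t, b₂)) - ∫ t in a₂..b₂, G (a₁, t) := by
  have hderiv {f : ℝ × ℝ → ℝ} (hf : ContDiffOn ℝ 1 f V) :
      ∀ s ∈ Ioo a₁ b₁ ×ˢ Ioo a₂ b₂ \ ∅, HasFDerivAt f (fderiv ℝ f s) s := fun s hs =>
    ((hf.contDiffAt (hV.mem_nhds (hRV (by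
      rw [← Icc_prod_Icc]
      exact prod_mono Ioo_subset_Icc_self Ioo_subset_Icc_self hs.1)))).differentiableAt
      one_ne_zero).hasFDerivAt
  have hcurl : ContinuousOn (fun s => fderiv ℝ G s (1, 0) - fderiv ℝ P s (0, 1)) V :=
    ((hG.continuousOn_fderiv_of_isOpen hV le_rfl).clm_apply continuousOn_const).sub
      ((hP.continuousOn_fderiv_of_isOpen hV le_rfl).clm_apply continuousOn_const)
  have := integral_divergence_prod_Icc_of_hasFDerivAt_off_countable_of_le G (fun s => -P s)
    (fderiv ℝ G) (fun s => -fderiv ℝ P s) (a₁, a₂) (b₁, b₂) ⟨h₁, h₂⟩ ∅ countable_empty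
    (hG.continuousOn.mono hRV) (hP.continuousOn.mono hRV).neg (hderiv hG)
    (fun s hs => (hderiv hP s hs).neg) ((hcurl.mono hRV).integrableOn_compact isCompact_Icc)
  simp only [neg_apply, ← sub_eq_add_neg, intervalIntegral.integral_neg] at this
  rw [this]
  ring

theorem greens_theorem_circulation_general
    (a₁ b₁ a₂ b₂ : ℝ) (ha₁ : a₁ < b₁) (ha₂ : a₂ < b₂)
    (U₀ : Set (ℝ × ℝ)) (hU₀ : IsOpen U₀) (hRU₀ : Set.Icc (a₁, a₂) (b₁, b₂) ⊆ U₀)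
    (x : ℝ × ℝ → EuclideanSpace ℝ (Fin 2)) (hx : ContDiffOn ℝ 2 x U₀)
    -- the tangent vectors x₁, x₂
    (x₁ x₂ : ℝ × ℝ → EuclideanSpace ℝ (Fin 2))
    (hx₁ : ∀ s, x₁ s = fderiv ℝ x s (1, 0)) (hx₂ : ∀ s, x₂ s = fderiv ℝ x s (0, 1))
    (U : Set (EuclideanSpace ℝ (Fin 2))) (hU : IsOpen U)
    (hxRU : x '' Set.Icc (a₁, a₂) (b₁, b₂) ⊆ U)
    (F : EuclideanSpace ℝ (Fin 2) → EuclideanSpace ℝ (Fin 2)) (hF : ContDiffOn ℝ 1 F U) :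
    (∫ s in Set.Icc (a₁, a₂) (b₁, b₂),
        (fderiv ℝ F (x s) (EuclideanSpace.single 0 (1 : ℝ)) 1
          - fderiv ℝ F (x s) (EuclideanSpace.single 1 (1 : ℝ)) 0) *
        (x₁ s 0 * x₂ s 1 - x₁ s 1 * x₂ s 0))
      = (∫ t in a₁..b₁, ⟪F (x (t, a₂)), x₁ (t, a₂)⟫)
        + (∫ t in a₂..b₂, ⟪F (x (b₁, t)), x₂ (b₁, t)⟫)
        - (∫ t in a₁..b₁, ⟪F (x (t, b₂)), x₁ (t, b₂)⟫)
        - (∫ t in a₂..b₂, ⟪F (x (a₁, t)), x₂ (a₁, t)⟫) := by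
  obtain rfl : x₁ = fun s => fderiv ℝ x s (1, 0) := funext hx₁
  obtain rfl : x₂ = fun s => fderiv ℝ x s (0, 1) := funext hx₂
  set V := U₀ ∩ x ⁻¹' U
  have hV : IsOpen V := hx.continuousOn.isOpen_inter_preimage hU₀ hU
  have hRV : Icc (a₁, a₂) (b₁, b₂) ⊆ V := fun s hs => ⟨hRU₀ hs, hxRU ⟨s, hs, rfl⟩⟩
  have hxV : ContDiffOn ℝ 2 x V := hx.mono inter_subset_left
  have hxVU : MapsTo x V U := fun s hs => hs.2
  rw [← integral_fderiv_sub_fderiv_eq_circulation_Icc ha₁.le ha₂.le hV hRV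
    (hxV.inner_comp_fderiv_apply hV hF hxVU _) (hxV.inner_comp_fderiv_apply hV hF hxVU _)]
  refine setIntegral_congr_fun measurableSet_Icc fun s hs => ?_
  have hsV := hRV hs
  rw [fderiv_inner_comp_fderiv_apply_sub_swap (hxV.contDiffAt (hV.mem_nhds hsV))
      ((hF.contDiffAt (hU.mem_nhds hsV.2)).differentiableAt one_ne_zero),
    EuclideanSpace.inner_apply_sub_inner_apply_swap]

/-- Green's theorem, circulation form, on a 2-patch in the plane.
`x : U₀ → ℝ²` is a `C²` regular 2-patch on a neighborhood `U₀` of the rectangle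
`R = [a¹,b¹]×[a²,b²]`, and `F = (P,Q)` is a `C¹` vector field on an open set `U ⊇ x(R)`.
Then `∫_R (∂Q/∂x − ∂P/∂y)(x(s))·det[x₁(s),x₂(s)] ds` equals the circulation of `F`
around the boundary of the patch. -/
theorem greens_theorem_circulation
    (a₁ b₁ a₂ b₂ : ℝ) (ha₁ : a₁ < b₁) (ha₂ : a₂ < b₂)
    (U₀ : Set (ℝ × ℝ)) (hU₀ : IsOpen U₀) (hRU₀ : Set.Icc (a₁, a₂) (b₁, b₂) ⊆ U₀)
    (x : ℝ × ℝ → EuclideanSpace ℝ (Fin 2)) (hx : ContDiffOn ℝ 2 x U₀)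
    -- the tangent vectors x₁, x₂
    (x₁ x₂ : ℝ × ℝ → EuclideanSpace ℝ (Fin 2))
    (hx₁ : ∀ s, x₁ s = fderiv ℝ x s (1, 0)) (hx₂ : ∀ s, x₂ s = fderiv ℝ x s (0, 1))
    (hreg : ∀ s ∈ Set.Icc (a₁, a₂) (b₁, b₂), LinearIndependent ℝ ![x₁ s, x₂ s])
    (U : Set (EuclideanSpace ℝ (Fin 2))) (hU : IsOpen U)
    (hxRU : x '' Set.Icc (a₁, a₂) (b₁, b₂) ⊆ U)
    (F : EuclideanSpace ℝ (Fin 2) → EuclideanSpace ℝ (Fin 2)) (hF : ContDiffOn ℝ 1 F U) :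
    (∫ s in Set.Icc (a₁, a₂) (b₁, b₂),
        (fderiv ℝ F (x s) (EuclideanSpace.single 0 (1 : ℝ)) 1
          - fderiv ℝ F (x s) (EuclideanSpace.single 1 (1 : ℝ)) 0) *
        (x₁ s 0 * x₂ s 1 - x₁ s 1 * x₂ s 0))
      = (∫ t in a₁..b₁, ⟪F (x (t, a₂)), x₁ (t, a₂)⟫)
        + (∫ t in a₂..b₂, ⟪F (x (b₁, t)), x₂ (b₁, t)⟫)
        - (∫ t in a₁..b₁, ⟪F (x (t, b₂)), x₁ (t, b₂)⟫)
        - (∫ t in a₂..b₂, ⟪F (x (a₁, t)), x₂ (a₁, t)⟫) :=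
  greens_theorem_circulation_general a₁ b₁ a₂ b₂ ha₁ ha₂ U₀ hU₀ hRU₀ x hx x₁ x₂ hx₁ hx₂ U hU hxRU F
    hF
end

section
/- (Green's theorem, flux/divergence form, on a 2-patch in the plane.) Let R = [a¹,b¹]×[a²,b²] ⊂ ℝ², let x : U₀ → ℝ² be a C² map on an open neighborhood U₀ of R whose partial derivatives x₁(s) = ∂x/∂s¹(s) and x₂(s) = ∂x/∂s²(s) are linearly independent for every s ∈ R, and let F = (P,Q) : U → ℝ² be a C¹ vector field on an open set U containing x(R). Let J : ℝ² → ℝ² be the rotation J(v₁,v₂) = (v₂,−v₁). Then ∫_R (∂P/∂x + ∂Q/∂y)(x(s)) · det[x₁(s), x₂(s)] ds¹ds² = ∫_{a¹}^{b¹} ⟪F(x(t,a²)), J(x₁(t,a²))⟫ dt + ∫_{a²}^{b²} ⟪F(x(b¹,t)), J(x₂(b¹,t))⟫ dt − ∫_{a¹}^{b¹} ⟪F(x(t,b²)), J(x₁(t,b²))⟫ dt − ∫_{a²}^{b²} ⟪F(x(a¹,t)), J(x₂(a¹,t))⟫ dt, where det[u,v] = u₁v₂ − u₂v₁ and ∂P/∂x,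 ∂Q/∂y denote partial derivatives with respect to the first and second coordinates of ℝ². -/
/-!
Pull the field back to the rectangle: with `P = ⟪F ∘ x, J ∂₂x⟫` and `Q = ⟪F ∘ x, J ∂₁x⟫` one has
`∂₁P - ∂₂Q = (div F ∘ x) · det[∂₁x, ∂₂x]`, since the terms with second derivatives of `x` cancel
by symmetry of `D²x`, and `det[Au, v] + det[u, Av] = tr A · det[u, v]` for `A = DF`. The
divergence theorem on the rectangle, applied to `(P, -Q)`, turns `∫ (∂₁P - ∂₂Q)` into the four
boundary integrals.
-/

open MeasureTheory RealInnerProductSpace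

noncomputable section

/-- The rotation `J(v₁,v₂) = (v₂,−v₁)` of the plane. -/
def rotJ (v : EuclideanSpace ℝ (Fin 2)) : EuclideanSpace ℝ (Fin 2) :=
  (WithLp.equiv 2 (Fin 2 → ℝ)).symm ![v 1, -v 0]

local notation "ℝ²" => EuclideanSpace ℝ (Fin 2)

open Set

theorem inner_rotJ (u v : ℝ²) : ⟪u, rotJ v⟫ = u 0 * v 1 - u 1 * v 0 := by
  simp only [rotJ, WithLp.equiv_symm_apply, PiLp.inner_apply, RCLike.inner_apply,
    Real.ringHom_apply, Fin.sum_univ_two, Matrix.cons_val_zero, Matrix.cons_val_one,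
    Matrix.cons_val_fin_one]
  ring

theorem inner_rotJ_swap (u v : ℝ²) : ⟪v, rotJ u⟫ = -⟪u, rotJ v⟫ := by
  simp only [inner_rotJ]
  ring

def rotJCLM : ℝ² →L[ℝ] ℝ² :=
  LinearMap.toContinuousLinearMap
    { toFun := rotJ
      map_add' := fun u v => by ext i; fin_cases i <;> simp [rotJ, add_comm]
      map_smul' := fun c v => by ext i; fin_cases i <;> simp [rotJ] }

@[simp] theorem rotJCLM_apply (v : ℝ²) : rotJCLM v = rotJ v := rfl

/-- The coefficient on the right is the trace of `A`. -/
theorem inner_rotJ_map_add (A : ℝ² →ₗ[ℝ] ℝ²) (u v : ℝ²) :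
    ⟪A u, rotJ v⟫ + ⟪u, rotJ (A v)⟫
      = (A (EuclideanSpace.single 0 1) 0 + A (EuclideanSpace.single 1 1) 1) * ⟪u, rotJ v⟫ := by
  have expand (w : ℝ²) : w = w 0 • EuclideanSpace.single 0 1 + w 1 • EuclideanSpace.single 1 1 := by
    ext j; fin_cases j <;> simp
  rw [expand u, expand v]
  simp only [map_add, map_smul, inner_rotJ, PiLp.add_apply, PiLp.smul_apply, smul_eq_mul, ne_eq,
    one_ne_zero, zero_ne_one, not_false_eq_true, PiLp.single_eq_of_ne, PiLp.single_eq_same,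
    mul_zero, mul_one, zero_add, add_zero]
  ring

def fluxAlong (F : ℝ² → ℝ²) (x : ℝ × ℝ → ℝ²) (v s : ℝ × ℝ) : ℝ :=
  ⟪F (x s), rotJ (fderiv ℝ x s v)⟫

section fluxAlong

variable {F : ℝ² → ℝ²} {x : ℝ × ℝ → ℝ²} {s : ℝ × ℝ}

theorem hasFDerivAt_fluxAlong (hx : ContDiffAt ℝ 2 x s) (hF : DifferentiableAt ℝ F (x s))
    (v : ℝ × ℝ) :
    HasFDerivAt (fluxAlong F x v)
      ((fderivInnerCLM ℝ (F (x s), rotJ (fderiv ℝ x s v))).comp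
        (((fderiv ℝ F (x s)).comp (fderiv ℝ x s)).prod
          (rotJCLM.comp ((ContinuousLinearMap.apply ℝ ℝ² v).comp
            (fderiv ℝ (fderiv ℝ x) s))))) s := by
  have hDx : HasFDerivAt x (fderiv ℝ x s) s := (hx.differentiableAt (by norm_num)).hasFDerivAt
  have hD2x : HasFDerivAt (fderiv ℝ x) (fderiv ℝ (fderiv ℝ x) s) s :=
    ((hx.fderiv_right (m := 1) (by norm_num)).differentiableAt (by norm_num)).hasFDerivAt
  exact (hF.hasFDerivAt.comp s hDx).inner ℝ
    (rotJCLM.hasFDerivAt.comp s ((ContinuousLinearMap.apply ℝ ℝ² v).hasFDerivAt.comp s hD2x))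

theorem fderiv_fluxAlong_apply (hx : ContDiffAt ℝ 2 x s) (hF : DifferentiableAt ℝ F (x s))
    (v w : ℝ × ℝ) :
    fderiv ℝ (fluxAlong F x v) s w
      = ⟪fderiv ℝ F (x s) (fderiv ℝ x s w), rotJ (fderiv ℝ x s v)⟫
        + ⟪F (x s), rotJ (fderiv ℝ (fderiv ℝ x) s w v)⟫ := by
  rw [(hasFDerivAt_fluxAlong hx hF v).fderiv]
  simp [fderivInnerCLM_apply, add_comm]

def divergence (F : ℝ² → ℝ²) (p : ℝ²) : ℝ :=
  fderiv ℝ F p (EuclideanSpace.single 0 1) 0 + fderiv ℝ F p (EuclideanSpace.single 1 1) 1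

/-- The second derivatives of `x` cancel by symmetry. -/
theorem fderiv_fluxAlong_sub (hx : ContDiffAt ℝ 2 x s) (hF : DifferentiableAt ℝ F (x s)) :
    fderiv ℝ (fluxAlong F x (0, 1)) s (1, 0) - fderiv ℝ (fluxAlong F x (1, 0)) s (0, 1)
      = divergence F (x s) * ⟪fderiv ℝ x s (1, 0), rotJ (fderiv ℝ x s (0, 1))⟫ := by
  have trace := inner_rotJ_map_add (fderiv ℝ F (x s) : ℝ² →ₗ[ℝ] ℝ²) (fderiv ℝ x s (1, 0))
    (fderiv ℝ x s (0, 1))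
  simp only [ContinuousLinearMap.coe_coe, inner_rotJ_swap (fderiv ℝ F (x s) _)] at trace
  rw [fderiv_fluxAlong_apply hx hF, fderiv_fluxAlong_apply hx hF,
    hx.isSymmSndFDerivAt (by simp) (0, 1) (1, 0), divergence, ← trace]
  ring

end fluxAlong

theorem ContDiffOn.continuousOn_divergence {F : ℝ² → ℝ²} {U : Set ℝ²} (hF : ContDiffOn ℝ 1 F U)
    (hU : IsOpen U) : ContinuousOn (divergence F) U := by
  have hDF := hF.continuousOn_fderiv_of_isOpen hU le_rfl
  exact
    ((EuclideanSpace.proj 0).continuous.comp_continuousOn (hDF.clm_apply continuousOn_const)).add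
      ((EuclideanSpace.proj 1).continuous.comp_continuousOn (hDF.clm_apply continuousOn_const))

theorem integral_flux_prod_Icc_of_differentiableAt {a₁ b₁ a₂ b₂ : ℝ} (h₁ : a₁ ≤ b₁) (h₂ : a₂ ≤ b₂)
    {P Q : ℝ × ℝ → ℝ} (hP : ∀ s ∈ Icc (a₁, a₂) (b₁, b₂), DifferentiableAt ℝ P s)
    (hQ : ∀ s ∈ Icc (a₁, a₂) (b₁, b₂), DifferentiableAt ℝ Q s)
    (hi : IntegrableOn (fun s => fderiv ℝ P s (1, 0) - fderiv ℝ Q s (0, 1))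
      (Icc (a₁, a₂) (b₁, b₂))) :
    ∫ s in Icc (a₁, a₂) (b₁, b₂), (fderiv ℝ P s (1, 0) - fderiv ℝ Q s (0, 1))
      = (∫ t in a₁..b₁, Q (t, a₂)) + (∫ t in a₂..b₂, P (b₁, t))
        - (∫ t in a₁..b₁, Q (t, b₂)) - (∫ t in a₂..b₂, P (a₁, t)) := by
  have interior_sub : Ioo a₁ b₁ ×ˢ Ioo a₂ b₂ \ ∅ ⊆ Icc (a₁, a₂) (b₁, b₂) := by
    rw [sdiff_empty, ← Icc_prod_Icc]
    exact prod_mono Ioo_subset_Icc_self Ioo_subset_Icc_self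
  have := integral_divergence_prod_Icc_of_hasFDerivAt_off_countable_of_le P (-Q)
    (fderiv ℝ P) (-fderiv ℝ Q) (a₁, a₂) (b₁, b₂) ⟨h₁, h₂⟩ ∅ countable_empty
    (fun s hs => (hP s hs).continuousAt.continuousWithinAt)
    (fun s hs => (hQ s hs).continuousAt.neg.continuousWithinAt)
    (fun s hs => (hP s (interior_sub hs)).hasFDerivAt)
    (fun s hs => (hQ s (interior_sub hs)).hasFDerivAt.neg)
    (by simpa only [Pi.neg_apply, neg_apply, ← sub_eq_add_neg] using hi)
  simp only [Pi.neg_apply, neg_apply, ← sub_eq_add_neg,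
    intervalIntegral.integral_neg] at this
  rw [this]
  ring

theorem greens_theorem_flux_general
    (a₁ b₁ a₂ b₂ : ℝ) (ha₁ : a₁ < b₁) (ha₂ : a₂ < b₂)
    (U₀ : Set (ℝ × ℝ)) (hU₀ : IsOpen U₀) (hRU₀ : Set.Icc (a₁, a₂) (b₁, b₂) ⊆ U₀)
    (x : ℝ × ℝ → EuclideanSpace ℝ (Fin 2)) (hx : ContDiffOn ℝ 2 x U₀)
    (x₁ x₂ : ℝ × ℝ → EuclideanSpace ℝ (Fin 2))
    (hx₁ : ∀ s, x₁ s = fderiv ℝ x s (1, 0)) (hx₂ : ∀ s, x₂ s = fderiv ℝ x s (0, 1))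
    (U : Set (EuclideanSpace ℝ (Fin 2))) (hU : IsOpen U)
    (hxRU : x '' Set.Icc (a₁, a₂) (b₁, b₂) ⊆ U)
    (F : EuclideanSpace ℝ (Fin 2) → EuclideanSpace ℝ (Fin 2)) (hF : ContDiffOn ℝ 1 F U) :
    (∫ s in Set.Icc (a₁, a₂) (b₁, b₂),
        (fderiv ℝ F (x s) (EuclideanSpace.single 0 (1 : ℝ)) 0
          + fderiv ℝ F (x s) (EuclideanSpace.single 1 (1 : ℝ)) 1) *
        (x₁ s 0 * x₂ s 1 - x₁ s 1 * x₂ s 0))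
      = (∫ t in a₁..b₁, ⟪F (x (t, a₂)), rotJ (x₁ (t, a₂))⟫)
        + (∫ t in a₂..b₂, ⟪F (x (b₁, t)), rotJ (x₂ (b₁, t))⟫)
        - (∫ t in a₁..b₁, ⟪F (x (t, b₂)), rotJ (x₁ (t, b₂))⟫)
        - (∫ t in a₂..b₂, ⟪F (x (a₁, t)), rotJ (x₂ (a₁, t))⟫) := by
  obtain rfl : x₁ = fun s => fderiv ℝ x s (1, 0) := funext hx₁
  obtain rfl : x₂ = fun s => fderiv ℝ x s (0, 1) := funext hx₂
  set R := Icc (a₁, a₂) (b₁, b₂)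
  have hxR : ∀ s ∈ R, ContDiffAt ℝ 2 x s :=
    fun s hs => hx.contDiffAt (hU₀.mem_nhds (hRU₀ hs))
  have hFR : ∀ s ∈ R, DifferentiableAt ℝ F (x s) := fun s hs =>
    (hF.contDiffAt (hU.mem_nhds (hxRU ⟨s, hs, rfl⟩))).differentiableAt one_ne_zero
  have hflux : ∀ v, ∀ s ∈ R, DifferentiableAt ℝ (fluxAlong F x v) s :=
    fun v s hs => (hasFDerivAt_fluxAlong (hxR s hs) (hFR s hs) v).differentiableAt
  have integrand : EqOn
      (fun s => divergence F (x s) * ⟪fderiv ℝ x s (1, 0), rotJ (fderiv ℝ x s (0, 1))⟫)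
      (fun s => fderiv ℝ (fluxAlong F x (0, 1)) s (1, 0)
        - fderiv ℝ (fluxAlong F x (1, 0)) s (0, 1)) R :=
    fun s hs => (fderiv_fluxAlong_sub (hxR s hs) (hFR s hs)).symm
  have hcont : ContinuousOn
      (fun s => divergence F (x s) * ⟪fderiv ℝ x s (1, 0), rotJ (fderiv ℝ x s (0, 1))⟫) R := by
    have hDx := (hx.continuousOn_fderiv_of_isOpen hU₀ (by norm_num)).mono hRU₀
    exact ((hF.continuousOn_divergence hU).comp (hx.continuousOn.mono hRU₀)
      (mapsTo_iff_image_subset.2 hxRU)).mul ((hDx.clm_apply continuousOn_const).inner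
        (rotJCLM.continuous.comp_continuousOn (hDx.clm_apply continuousOn_const)))
  simp only [← inner_rotJ]
  refine (setIntegral_congr_fun measurableSet_Icc integrand).trans ?_
  exact integral_flux_prod_Icc_of_differentiableAt ha₁.le ha₂.le (hflux _) (hflux _)
    ((hcont.integrableOn_compact isCompact_Icc).congr_fun integrand measurableSet_Icc)

/-- Green's theorem, flux/divergence form, on a 2-patch in the plane.
`∫_R (∂P/∂x + ∂Q/∂y)(x(s))·det[x₁(s),x₂(s)] ds` equals the outward flux of `F`
through the boundary of the patch. -/
theorem greens_theorem_flux
    (a₁ b₁ a₂ b₂ : ℝ) (ha₁ : a₁ < b₁) (ha₂ : a₂ < b₂)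
    (U₀ : Set (ℝ × ℝ)) (hU₀ : IsOpen U₀) (hRU₀ : Set.Icc (a₁, a₂) (b₁, b₂) ⊆ U₀)
    (x : ℝ × ℝ → EuclideanSpace ℝ (Fin 2)) (hx : ContDiffOn ℝ 2 x U₀)
    (x₁ x₂ : ℝ × ℝ → EuclideanSpace ℝ (Fin 2))
    (hx₁ : ∀ s, x₁ s = fderiv ℝ x s (1, 0)) (hx₂ : ∀ s, x₂ s = fderiv ℝ x s (0, 1))
    (hreg : ∀ s ∈ Set.Icc (a₁, a₂) (b₁, b₂), LinearIndependent ℝ ![x₁ s, x₂ s])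
    (U : Set (EuclideanSpace ℝ (Fin 2))) (hU : IsOpen U)
    (hxRU : x '' Set.Icc (a₁, a₂) (b₁, b₂) ⊆ U)
    (F : EuclideanSpace ℝ (Fin 2) → EuclideanSpace ℝ (Fin 2)) (hF : ContDiffOn ℝ 1 F U) :
    (∫ s in Set.Icc (a₁, a₂) (b₁, b₂),
        (fderiv ℝ F (x s) (EuclideanSpace.single 0 (1 : ℝ)) 0
          + fderiv ℝ F (x s) (EuclideanSpace.single 1 (1 : ℝ)) 1) *
        (x₁ s 0 * x₂ s 1 - x₁ s 1 * x₂ s 0))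
      = (∫ t in a₁..b₁, ⟪F (x (t, a₂)), rotJ (x₁ (t, a₂))⟫)
        + (∫ t in a₂..b₂, ⟪F (x (b₁, t)), rotJ (x₂ (b₁, t))⟫)
        - (∫ t in a₁..b₁, ⟪F (x (t, b₂)), rotJ (x₁ (t, b₂))⟫)
        - (∫ t in a₂..b₂, ⟪F (x (a₁, t)), rotJ (x₂ (a₁, t))⟫) :=
  greens_theorem_flux_general a₁ b₁ a₂ b₂ ha₁ ha₂ U₀ hU₀ hRU₀ x hx x₁ x₂ hx₁ hx₂ U hU hxRU F hF
end
end

section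
/- The Cauchy kernel is monogenic away from the origin: let n ≥ 2 and define E : ℝⁿ∖{0} → ℝⁿ by E(y) = y/‖y‖ⁿ. Then E is C¹ on ℝⁿ∖{0} and for every y ≠ 0, (∂E)(y) := ∑_{i=1}^{n} ι(e_i) · ι( (∂E/∂y_i)(y) ) = 0 in G_n, where (e_i) is the standard orthonormal basis of ℝⁿ, ∂E/∂y_i is the partial derivative of E in direction e_i, and the product is the product in G_n. -/
noncomputable section

/-- The geometric algebra `G_n` of Euclidean `n`-space. -/
abbrev G (n : ℕ) := CliffordAlgebra (Qf n)

/-!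
With `r = ‖y‖`, the derivative of `E` at `y` is `v ↦ r⁻ⁿ v - n r⁻ⁿ⁻² ⟪y, v⟫ y`.
Because `ι(eᵢ)² = 1`, the first term contributes `n r⁻ⁿ` to `∑ ι(eᵢ) ι(∂ᵢE)`; because
`∑ ⟪y, eᵢ⟫ eᵢ = y`, the second contributes `-n r⁻ⁿ⁻² ι(y)² = -n r⁻ⁿ`, and the two cancel.
-/

open scoped RealInnerProductSpace

variable {F : Type*} [NormedAddCommGroup F] [InnerProductSpace ℝ F]

theorem hasFDerivAt_norm_of_ne_zero {y : F} (hy : y ≠ 0) :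
    HasFDerivAt (‖·‖) (‖y‖⁻¹ • innerSL ℝ y) y := by
  have hpos : 0 < ‖y‖ := norm_pos_iff.mpr hy
  convert (hasStrictFDerivAt_norm_sq y).hasFDerivAt.sqrt (by positivity) using 1
  · simp
  · ext v
    simp [Real.sqrt_sq hpos.le]
    field_simp

theorem hasFDerivAt_inv_norm_pow_smul (k : ℕ) {y : F} (hy : y ≠ 0) :
    HasFDerivAt (fun x : F => (‖x‖ ^ k)⁻¹ • x)
      ((‖y‖ ^ k)⁻¹ • ContinuousLinearMap.id ℝ F
        - (k * (‖y‖ ^ (k + 2))⁻¹) • (innerSL ℝ y).smulRight y) y := by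
  have hinv : HasDerivAt (fun t : ℝ => (t ^ k)⁻¹) (-(k * ‖y‖ ^ (k - 1)) / (‖y‖ ^ k) ^ 2) ‖y‖ :=
    (hasDerivAt_pow k ‖y‖).fun_inv (by positivity)
  convert (hinv.comp_hasFDerivAt y (hasFDerivAt_norm_of_ne_zero hy)).smul
    (hasFDerivAt_id y) using 1
  · rfl
  ext v
  -- `k - 1` above is truncated subtraction, so `k = 0` is split off
  rcases k with _ | k
  · simp
  simp only [add_apply, smul_apply, ContinuousLinearMap.smulRight_apply, innerSL_apply_apply,
    ContinuousLinearMap.coe_id', id_eq, Function.comp_apply, add_tsub_cancel_right, smul_eq_mul,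
    smul_smul, sub_eq_add_neg, ← neg_smul]
  congr 2
  field_simp
  ring

theorem contDiffAt_inv_norm_pow_smul {m : WithTop ℕ∞} (k : ℕ) {y : F} (hy : y ≠ 0) :
    ContDiffAt ℝ m (fun x : F => (‖x‖ ^ k)⁻¹ • x) y :=
  (((contDiffAt_norm ℝ hy).pow k).inv (pow_ne_zero k (norm_ne_zero_iff.mpr hy))).smul
    contDiffAt_id

namespace OrthonormalBasis

open CliffordAlgebra

variable {κ : Type*} [Fintype κ] (b : OrthonormalBasis κ ℝ F)
  {Q : QuadraticForm ℝ F} (hQ : ∀ v, Q v = ‖v‖ ^ 2)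
include hQ

theorem sum_ι_mul_ι_self : ∑ i, ι Q (b i) * ι Q (b i) = algebraMap ℝ _ (Fintype.card κ) := by
  simp [ι_sq_scalar, hQ, b.orthonormal.1 _]

theorem sum_inner_smul_ι_mul_ι (y : F) :
    ∑ i, ⟪b i, y⟫ • (ι Q (b i) * ι Q y) = algebraMap ℝ _ (‖y‖ ^ 2) := by
  simp_rw [← smul_mul_assoc, ← map_smul, ← Finset.sum_mul, ← map_sum, b.sum_repr', ι_sq_scalar,
    hQ]

theorem sum_ι_mul_ι_smul_sub_inner_smul (a c : ℝ) (y : F) :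
    ∑ i, ι Q (b i) * ι Q (a • b i - c • ⟪y, b i⟫ • y)
      = algebraMap ℝ _ (a * Fintype.card κ - c * ‖y‖ ^ 2) := by
  simp only [map_sub, map_smul, mul_sub, mul_smul_comm, Finset.sum_sub_distrib,
    ← Finset.smul_sum, real_inner_comm (b _) y, b.sum_ι_mul_ι_self hQ,
    b.sum_inner_smul_ι_mul_ι hQ]
  simp only [map_mul, Algebra.smul_def]

end OrthonormalBasis

theorem Qf_apply {n : ℕ} (v : EuclideanSpace ℝ (Fin n)) : Qf n v = ‖v‖ ^ 2 := by
  rw [Qf, LinearMap.BilinMap.toQuadraticMap_apply, innerₗ_apply_apply,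
    real_inner_self_eq_norm_sq]

theorem cauchy_kernel_monogenic_general {n : ℕ}
    (E : EuclideanSpace ℝ (Fin n) → EuclideanSpace ℝ (Fin n))
    (hE : ∀ y, E y = (‖y‖ ^ n)⁻¹ • y) :
    ContDiffOn ℝ 1 E {y : EuclideanSpace ℝ (Fin n) | y ≠ 0} ∧
    ∀ y : EuclideanSpace ℝ (Fin n), y ≠ 0 →
      ∑ i : Fin n,
        CliffordAlgebra.ι (Qf n) (EuclideanSpace.single i (1 : ℝ)) *
          CliffordAlgebra.ι (Qf n) (fderiv ℝ E y (EuclideanSpace.single i (1 : ℝ)))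
        = 0 := by
  obtain rfl : E = fun y => (‖y‖ ^ n)⁻¹ • y := funext hE
  refine ⟨fun y hy => (contDiffAt_inv_norm_pow_smul n hy).contDiffWithinAt, fun y hy => ?_⟩
  have hdirac := (EuclideanSpace.basisFun (Fin n) ℝ).sum_ι_mul_ι_smul_sub_inner_smul Qf_apply
    (‖y‖ ^ n)⁻¹ (n * (‖y‖ ^ (n + 2))⁻¹) y
  simp only [EuclideanSpace.basisFun_apply, Fintype.card_fin] at hdirac
  have hcancel : (‖y‖ ^ n)⁻¹ * n - n * (‖y‖ ^ (n + 2))⁻¹ * ‖y‖ ^ 2 = 0 := by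
    have : ‖y‖ ≠ 0 := norm_ne_zero_iff.mpr hy
    field_simp
    ring
  rw [(hasFDerivAt_inv_norm_pow_smul n hy).fderiv]
  simp only [sub_apply, smul_apply, ContinuousLinearMap.smulRight_apply, innerSL_apply_apply,
    ContinuousLinearMap.coe_id', id_eq]
  rw [hdirac, hcancel, map_zero]

/-- the Cauchy kernel `E(y) = y/‖y‖ⁿ` is `C¹` away from the origin and is
monogenic there: `∑ᵢ ι(eᵢ)·ι(∂E/∂yᵢ(y)) = 0` in `G_n` for every `y ≠ 0` (`n ≥ 2`). -/
theorem cauchy_kernel_monogenic {n : ℕ} (hn : 2 ≤ n)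
    (E : EuclideanSpace ℝ (Fin n) → EuclideanSpace ℝ (Fin n))
    (hE : ∀ y, E y = (‖y‖ ^ n)⁻¹ • y) :
    ContDiffOn ℝ 1 E {y : EuclideanSpace ℝ (Fin n) | y ≠ 0} ∧
    ∀ y : EuclideanSpace ℝ (Fin n), y ≠ 0 →
      ∑ i : Fin n,
        CliffordAlgebra.ι (Qf n) (EuclideanSpace.single i (1 : ℝ)) *
          CliffordAlgebra.ι (Qf n) (fderiv ℝ E y (EuclideanSpace.single i (1 : ℝ)))
        = 0 :=
  cauchy_kernel_monogenic_general E hE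
end
end
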